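/- Let μ ∈ (0,1) and λ* ∈ (0,1), let (A,B) be controllable, let X ⊆ ℝⁿ and U ⊆ ℝᵐ be C-sets, let C be a λ*-contractive C-set, and set ε := (1−μ)/(2μ). Assume λ ∈ [λ*, 1) and k ∈ ℕ are such that Q_k^λ(X) ⊆ (1+ε)·Q_k^λ(C) ⊆ (1+ε)·C_max^λ and 1 + μ ≤ 2λ^k. Then μ·C_max^1 ⊆ Q_k^λ(C) ⊆ C_max^λ, where C_max^1 is the maximal controlled invariant set. -/

import Mathlib

open Set Metric Pointwise

noncomputable section

abbrev Euc (n : ℕ) := EuclideanSpace ℝ (Fin n)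

def IsCSet {n : ℕ} (C : Set (Euc n)) : Prop :=
  Convex ℝ C ∧ IsCompact C ∧ (0 : Euc n) ∈ interior C

def rho {n : ℕ} (ξ : Euc n) (C : Set (Euc n)) : ℝ :=
  sSup {μ : ℝ | 0 < μ ∧ μ • ξ ∈ C}

def cdist {n : ℕ} (C D : Set (Euc n)) : ℝ :=
  ⨆ ξ : sphere (0 : Euc n) 1, |Real.log (rho ξ C) - Real.log (rho ξ D)|

def Q1 {n m : ℕ} (A : Matrix (Fin n) (Fin n) ℝ) (B : Matrix (Fin n) (Fin m) ℝ)
    (X : Set (Euc n)) (U : Set (Euc m)) (lam : ℝ) (D : Set (Euc n)) : Set (Euc n) :=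
  {x ∈ X | ∃ u ∈ U, WithLp.toLp 2 (A.mulVec x + B.mulVec u) ∈ lam • D}

def Qiter {n m : ℕ} (A : Matrix (Fin n) (Fin n) ℝ) (B : Matrix (Fin n) (Fin m) ℝ)
    (X : Set (Euc n)) (U : Set (Euc m)) (lam : ℝ) (D : Set (Euc n)) : ℕ → Set (Euc n)
  | 0 => D
  | k + 1 => Q1 A B X U lam (Qiter A B X U lam D k)

def IsContractive {n m : ℕ} (A : Matrix (Fin n) (Fin n) ℝ) (B : Matrix (Fin n) (Fin m) ℝ)
    (X : Set (Euc n)) (U : Set (Euc m)) (lam : ℝ) (C : Set (Euc n)) : Prop :=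
  C ⊆ X ∧ ∀ x ∈ C, ∃ u ∈ U, WithLp.toLp 2 (A.mulVec x + B.mulVec u) ∈ lam • C

def Cmax {n m : ℕ} (A : Matrix (Fin n) (Fin n) ℝ) (B : Matrix (Fin n) (Fin m) ℝ)
    (X : Set (Euc n)) (U : Set (Euc m)) (lam : ℝ) : Set (Euc n) :=
  ⋃₀ {C | IsContractive A B X U lam C}

def ctrb {n m : ℕ} (A : Matrix (Fin n) (Fin n) ℝ) (B : Matrix (Fin n) (Fin m) ℝ) :
    Matrix (Fin n) (Fin n × Fin m) ℝ :=
  Matrix.of fun i p => (A ^ (n - 1 - (p.1 : ℕ)) * B) i p.2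

def Controllable {n m : ℕ} (A : Matrix (Fin n) (Fin n) ℝ)
    (B : Matrix (Fin n) (Fin m) ℝ) : Prop :=
  (ctrb A B).rank = n

def enorm {ι : Type*} [Fintype ι] (v : ι → ℝ) : ℝ :=
  ‖(WithLp.equiv 2 (ι → ℝ)).symm v‖

def sigmaMax {n : ℕ} {ι : Type*} [Fintype ι] (Φ : Matrix (Fin n) ι ℝ) : ℝ :=
  ⨆ ξ : sphere (0 : EuclideanSpace ℝ ι) 1, enorm (Φ.mulVec ξ)

def sigmaMin {n : ℕ} {ι : Type*} [Fintype ι] (Φ : Matrix (Fin n) ι ℝ) : ℝ :=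
  ⨅ ξ : sphere (0 : Euc n) 1, enorm (Φ.transpose.mulVec ξ)

def alphaA {n : ℕ} (A : Matrix (Fin n) (Fin n) ℝ) : ℝ :=
  max 1 (⨆ j ∈ Finset.Icc 1 n, sigmaMax (A ^ j))

def rhoHat {n m : ℕ} (A : Matrix (Fin n) (Fin n) ℝ) (B : Matrix (Fin n) (Fin m) ℝ)
    (lam rx ru : ℝ) : ℝ :=
  lam ^ (n - 1) / alphaA A *
    min (rx / (1 + sigmaMax (ctrb A B) / sigmaMin (ctrb A B)))
        (ru * sigmaMin (ctrb A B))

end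

/-!
A controlled invariant set `S` shrunk by a factor `c ≤ λ^k` lies in `Q_k^λ(X)`: scaling by `c` the
inputs that keep `S` invariant steers `c • S` into `λ • ((c / λ) • S)`. For `c = μ (1 + ε) = (1 + μ) / 2`,
which is at most `λ^k`, the hypothesis `Q_k^λ(X) ⊆ (1 + ε) • Q_k^λ(C)` then yields `μ • S ⊆ Q_k^λ(C)`.
The other inclusion holds because `Q₁^λ` preserves `λ`-contractivity and `C`, being star-convex,
is `λ`-contractive for every `λ ≥ λ*`.
-/

lemma StarConvex.smul_set_subset_smul_set {E : Type*} [AddCommGroup E] [Module ℝ E] {s : Set E}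
    (hs : StarConvex ℝ 0 s) {a b : ℝ} (ha : 0 ≤ a) (hab : a ≤ b) : a • s ⊆ b • s := by
  rcases (ha.trans hab).eq_or_lt with rfl | hb
  · rw [le_antisymm hab ha]
  rintro _ ⟨x, hx, rfl⟩
  refine ⟨(a / b) • x, hs.smul_mem hx (div_nonneg ha hb.le) ((div_le_one hb).2 hab), ?_⟩
  simp only [smul_smul, mul_div_cancel₀ _ hb.ne']

section

variable {n m : ℕ} {A : Matrix (Fin n) (Fin n) ℝ} {B : Matrix (Fin n) (Fin m) ℝ}
  {X : Set (Euc n)} {U : Set (Euc m)}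

lemma toLp_mulVec_add_mulVec_smul (c : ℝ) (x : Euc n) (u : Euc m) :
    WithLp.toLp 2 (A.mulVec (c • x).ofLp + B.mulVec (c • u).ofLp)
      = c • WithLp.toLp 2 (A.mulVec x + B.mulVec u) := by
  ext i
  simp [Matrix.mulVec_smul]

lemma IsContractive.mono {lam lam' : ℝ} {C : Set (Euc n)} (hC : IsContractive A B X U lam C)
    (hCs : StarConvex ℝ 0 C) (hlam : 0 ≤ lam) (hlam' : lam ≤ lam') :
    IsContractive A B X U lam' C := by
  refine ⟨hC.1, fun x hx => ?_⟩
  obtain ⟨u, hu, hmem⟩ := hC.2 x hx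
  exact ⟨u, hu, hCs.smul_set_subset_smul_set hlam hlam' hmem⟩

lemma IsContractive.q1 {lam : ℝ} {D : Set (Euc n)} (hD : IsContractive A B X U lam D) :
    IsContractive A B X U lam (Q1 A B X U lam D) := by
  have hsub : D ⊆ Q1 A B X U lam D := fun y hy => ⟨hD.1 hy, hD.2 y hy⟩
  refine ⟨fun x hx => hx.1, fun x hx => ?_⟩
  obtain ⟨u, hu, hmem⟩ := hx.2
  exact ⟨u, hu, smul_set_mono hsub hmem⟩

lemma IsContractive.qiter {lam : ℝ} {D : Set (Euc n)} (hD : IsContractive A B X U lam D)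
    (k : ℕ) : IsContractive A B X U lam (Qiter A B X U lam D k) := by
  induction k with
  | zero => exact hD
  | succ k ih => exact ih.q1

lemma IsContractive.smul_mem_qiter {lam : ℝ} (hlam0 : 0 < lam) (hlam1 : lam ≤ 1)
    (hX : StarConvex ℝ 0 X) (hU : StarConvex ℝ 0 U) {S : Set (Euc n)}
    (hS : IsContractive A B X U 1 S) (k : ℕ) {c : ℝ} (hc0 : 0 ≤ c) (hck : c ≤ lam ^ k)
    {x : Euc n} (hx : x ∈ S) : c • x ∈ Qiter A B X U lam X k := by
  induction k generalizing c x with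
  | zero => exact hX.smul_mem (hS.1 hx) hc0 (by simpa using hck)
  | succ k ih =>
    have hc1 : c ≤ 1 := hck.trans (pow_le_one₀ hlam0.le hlam1)
    obtain ⟨u, hu, hmem⟩ := hS.2 x hx
    rw [one_smul] at hmem
    have hnext : (c / lam) • WithLp.toLp 2 (A.mulVec x + B.mulVec u) ∈ Qiter A B X U lam X k :=
      ih (div_nonneg hc0 hlam0.le) ((div_le_iff₀ hlam0).2 (pow_succ lam k ▸ hck)) hmem
    refine ⟨hX.smul_mem (hS.1 hx) hc0 hc1, c • u, hU.smul_mem hu hc0 hc1, ?_⟩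
    rw [toLp_mulVec_add_mulVec_smul, ← mul_div_cancel₀ c hlam0.ne', ← smul_smul]
    exact smul_mem_smul_set hnext

end

theorem stmt16_general {n m : ℕ} (μ lamStar : ℝ)
    (hμ : μ ∈ Set.Ioo (0 : ℝ) 1) (hlamStar : lamStar ∈ Set.Ioo (0 : ℝ) 1)
    (A : Matrix (Fin n) (Fin n) ℝ) (B : Matrix (Fin n) (Fin m) ℝ)
    (X : Set (Euc n)) (U : Set (Euc m)) (hX : IsCSet X) (hU : IsCSet U)
    (C : Set (Euc n)) (hC : IsCSet C) (hCcontr : IsContractive A B X U lamStar C)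
    (lam : ℝ) (hlam : lam ∈ Set.Ico lamStar 1) (k : ℕ)
    (h1 : Qiter A B X U lam X k ⊆ (1 + (1 - μ) / (2 * μ)) • Qiter A B X U lam C k)
    (h3 : 1 + μ ≤ 2 * lam ^ k) :
    μ • Cmax A B X U 1 ⊆ Qiter A B X U lam C k ∧
      Qiter A B X U lam C k ⊆ Cmax A B X U lam := by
  obtain ⟨hμ0, hμ1⟩ := hμ
  obtain ⟨hlamStar0, -⟩ := hlamStar
  obtain ⟨hlamStar_le, hlam1⟩ := hlam
  have hlam0 : 0 < lam := hlamStar0.trans_le hlamStar_le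
  have hQ : IsContractive A B X U lam (Qiter A B X U lam C k) :=
    (hCcontr.mono (hC.1.starConvex (interior_subset hC.2.2)) hlamStar0.le hlamStar_le).qiter k
  refine ⟨?_, subset_sUnion_of_mem hQ⟩
  set t := 1 + (1 - μ) / (2 * μ)
  have ht : 0 < t := by have : 0 < 1 - μ := sub_pos.2 hμ1; positivity
  have hμt : μ * t = (1 + μ) / 2 := by simp only [t]; field_simp; ring
  rintro _ ⟨x, ⟨S, hS, hxS⟩, rfl⟩
  have hx : (μ * t) • x ∈ Qiter A B X U lam X k :=
    hS.smul_mem_qiter hlam0 hlam1.le (hX.1.starConvex (interior_subset hX.2.2))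
      (hU.1.starConvex (interior_subset hU.2.2)) k (by positivity) (by linarith) hxS
  rw [← smul_mem_smul_set_iff₀ ht.ne', smul_smul, mul_comm]
  exact h1 hx

theorem stmt16 {n m : ℕ} (μ lamStar : ℝ)
    (hμ : μ ∈ Set.Ioo (0 : ℝ) 1) (hlamStar : lamStar ∈ Set.Ioo (0 : ℝ) 1)
    (A : Matrix (Fin n) (Fin n) ℝ) (B : Matrix (Fin n) (Fin m) ℝ)
    (hAB : Controllable A B)
    (X : Set (Euc n)) (U : Set (Euc m)) (hX : IsCSet X) (hU : IsCSet U)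
    (C : Set (Euc n)) (hC : IsCSet C) (hCcontr : IsContractive A B X U lamStar C)
    (lam : ℝ) (hlam : lam ∈ Set.Ico lamStar 1) (k : ℕ)
    (h1 : Qiter A B X U lam X k ⊆ (1 + (1 - μ) / (2 * μ)) • Qiter A B X U lam C k)
    (h2 : (1 + (1 - μ) / (2 * μ)) • Qiter A B X U lam C k
        ⊆ (1 + (1 - μ) / (2 * μ)) • Cmax A B X U lam)
    (h3 : 1 + μ ≤ 2 * lam ^ k) :
    μ • Cmax A B X U 1 ⊆ Qiter A B X U lam C k ∧
      Qiter A B X U lam C k ⊆ Cmax A B X U lam :=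
  stmt16_general μ lamStar hμ hlamStar A B X U hX hU C hC hCcontr lam hlam k h1 h3
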